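/- Let m ≥ 2 and r ≥ 1. The collection R = { {1,…,m−1} ∪ {m−1+j} : 1 ≤ j ≤ r } is a closed set family of shape (m^r) whose type is defined and equals the partition (m+r−1, (m−1)^{r−1}) of mr. Moreover R is a minimal set family: no set family of shape (m^r) has a defined type strictly dominated by (m+r−1, (m−1)^{r−1}). -/

import Mathlib

/-- The multiplicity of `i` in a set family `P`: the number of sets in `P` containing `i`. -/
def famMult (P : Finset (Finset ℕ)) (i : ℕ) : ℕ := (P.filter fun S => i ∈ S).card

/-- `P` is a set family of shape `(m^n)`: a collection of `n` distinct `m`-subsets of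
the positive integers. -/
def IsSetFamily (m n : ℕ) (P : Finset (Finset ℕ)) : Prop :=
  P.card = n ∧ ∀ S ∈ P, S.card = m ∧ ∀ x ∈ S, 1 ≤ x

/-- `B` majorizes `A` (written `A ⪯ B`): the `r`-th smallest element of `A` is at most
the `r`-th smallest element of `B` (the sets in question have the same cardinality). -/
def SetMaj (A B : Finset ℕ) : Prop :=
  ∀ r : ℕ, (A.sort (· ≤ ·)).getD r 0 ≤ (B.sort (· ≤ ·)).getD r 0

/-- A set family (of `m`-subsets) is closed if it is downward closed under majorization. -/
def ClosedFam (m : ℕ) (P : Finset (Finset ℕ)) : Prop :=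
  ∀ B ∈ P, ∀ A : Finset ℕ, A.card = m → (∀ x ∈ A, 1 ≤ x) → SetMaj A B → A ∈ P

/-- The type of a family (or tuple) whose multiplicity function is `f` is defined exactly
when `f` is weakly decreasing on the positive integers; then `f` is the conjugate `λ'`
of the type `λ`. -/
def TypeDefined (f : ℕ → ℕ) : Prop := ∀ i j : ℕ, 1 ≤ i → i ≤ j → f j ≤ f i

/-- The sum of the first `j` parts of the partition `λ` whose conjugate is `f`:
`λ_1 + ⋯ + λ_j = Σ_x min (λ'_x) j`. -/
noncomputable def partSum (f : ℕ → ℕ) (j : ℕ) : ℕ := ∑ᶠ x, min (f x) j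

/-- Dominance order: the partition with conjugate `g` is dominated (`⊴`) by the partition
with conjugate `f`. -/
def ConjDom (g f : ℕ → ℕ) : Prop := ∀ j : ℕ, partSum g j ≤ partSum f j

/-- Strict dominance `⊲` of the partition with conjugate `g` by the one with conjugate `f`. -/
def ConjStrictDom (g f : ℕ → ℕ) : Prop := ConjDom g f ∧ ∃ i : ℕ, 1 ≤ i ∧ g i ≠ f i

/-- The total multiplicity of `i` over a tuple of set families. -/
def tupMult {k : ℕ} (P : Fin k → Finset (Finset ℕ)) (i : ℕ) : ℕ := ∑ j, famMult (P j) i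

/-- The set family `{ {1,…,m-1} ∪ {m-1+j} : 1 ≤ j ≤ r }`. -/
def hookFam (m r : ℕ) : Finset (Finset ℕ) :=
  (Finset.Icc 1 r).image fun j => insert (m - 1 + j) (Finset.Icc 1 (m - 1))

/-!
Closedness: positivity forces the `k`-th smallest element of an `m`-set `A` to be at least
`k + 1`, so `A ⪯ {1, …, m-1, e}` pins down the first `m - 1` elements and `A = {1, …, m-1, a}`
with `m ≤ a ≤ e`.

Minimality: let `P` have type `λ ⊴ μ = (m+r-1, (m-1)^{r-1})`. All multiplicities are at most `r`
and both totals are `m r`, so dominance at the first `r - 1` parts gives `λ_r ≥ μ_r ≥ m - 1`: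
at least `m - 1` points, hence (multiplicities decreasing) `1, …, m-1`, lie in every set. The `r`
distinct sets then differ only in their last element, so `λ_1 ≥ m + r - 1`. Thus the
multiplicities of `P` dominate those of `R` pointwise, and equal totals force equality.
-/

open Finset

section SetFamily

variable {P : Finset (Finset ℕ)}

lemma famMult_le_card (P : Finset (Finset ℕ)) (x : ℕ) : famMult P x ≤ P.card :=
  card_filter_le _ _

lemma one_le_famMult_of_mem {S : Finset ℕ} {x : ℕ} (hS : S ∈ P) (hx : x ∈ S) :
    1 ≤ famMult P x :=
  card_pos.2 ⟨S, mem_filter.2 ⟨hS, hx⟩⟩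

lemma mem_of_famMult_eq_card {x : ℕ} (h : famMult P x = P.card) {S : Finset ℕ} (hS : S ∈ P) :
    x ∈ S :=
  filter_card_eq h S hS

lemma mem_biUnion_of_famMult_ne_zero {Q : Finset (Finset ℕ)} (hPQ : P ⊆ Q) {x : ℕ}
    (hx : famMult P x ≠ 0) : x ∈ Q.biUnion id := by
  obtain ⟨S, hS⟩ := card_pos.1 (Nat.pos_of_ne_zero hx)
  rw [mem_filter] at hS
  exact mem_biUnion.2 ⟨S, hPQ hS.1, hS.2⟩

lemma sum_famMult_of_subset {s : Finset ℕ} (hs : ∀ S ∈ P, S ⊆ s) :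
    ∑ x ∈ s, famMult P x = ∑ S ∈ P, S.card := by
  calc ∑ x ∈ s, famMult P x = ∑ S ∈ P, #(s ∩ S) := by
        simp_rw [famMult, ← filter_mem_eq_inter, card_eq_sum_ones, sum_filter]
        exact sum_comm
    _ = ∑ S ∈ P, S.card := sum_congr rfl fun S hS => by rw [inter_eq_right.2 (hs S hS)]

lemma IsSetFamily.sum_famMult {m n : ℕ} (hP : IsSetFamily m n P) {s : Finset ℕ}
    (hs : ∀ S ∈ P, S ⊆ s) : ∑ x ∈ s, famMult P x = m * n := by
  rw [sum_famMult_of_subset hs, sum_congr rfl fun S hS => (hP.2 S hS).1, sum_const, hP.1,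
    smul_eq_mul, mul_comm]

lemma IsSetFamily.famMult_zero {m n : ℕ} (hP : IsSetFamily m n P) : famMult P 0 = 0 :=
  card_eq_zero.2 <| filter_eq_empty_iff.2 fun S hS h0 => by have := (hP.2 S hS).2 0 h0; omega

lemma IsSetFamily.famMult_eq_of_le {m n : ℕ} {Q : Finset (Finset ℕ)} (hP : IsSetFamily m n P)
    (hQ : IsSetFamily m n Q) (hle : ∀ x, famMult P x ≤ famMult Q x) : famMult P = famMult Q := by
  set V := (P ∪ Q).biUnion id
  have hsum : ∑ x ∈ V, famMult P x = ∑ x ∈ V, famMult Q x := by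
    rw [hP.sum_famMult fun S hS => subset_biUnion_of_mem id (mem_union_left Q hS),
      hQ.sum_famMult fun S hS => subset_biUnion_of_mem id (mem_union_right P hS)]
  funext x
  by_cases hx : x ∈ V
  · exact (sum_eq_sum_iff_of_le fun x _ => hle x).1 hsum x hx
  · have hQx : famMult Q x = 0 := by
      by_contra h
      exact hx (mem_biUnion_of_famMult_ne_zero subset_union_right h)
    have := hle x
    omega

lemma card_le_card_sdiff_of_forall_subset {α : Type*} [DecidableEq α] {P : Finset (Finset α)}
    {I V : Finset α} (hI : ∀ S ∈ P, I ⊆ S ∧ S.card = I.card + 1) (hV : ∀ S ∈ P, S ⊆ V) :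
    P.card ≤ (V \ I).card := by
  calc P.card ≤ ((V \ I).powersetCard 1).card := by
        refine card_le_card_of_injOn (· \ I) (fun S hS => ?_) fun S hS T hT hST => ?_
        · rw [mem_coe, mem_powersetCard, card_sdiff_of_subset (hI S hS).1, (hI S hS).2]
          exact ⟨sdiff_subset_sdiff (hV S hS) le_rfl, by omega⟩
        · rw [← sdiff_union_of_subset (hI S hS).1, ← sdiff_union_of_subset (hI T hT).1]
          exact congrArg (· ∪ I) hST
    _ = (V \ I).card := by rw [card_powersetCard, Nat.choose_one_right]

end SetFamily

section Conjugate

variable {f : ℕ → ℕ} {s : Finset ℕ}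

lemma partSum_eq_sum (hs : ∀ x, f x ≠ 0 → x ∈ s) (j : ℕ) :
    partSum f j = ∑ x ∈ s, min (f x) j :=
  finsum_eq_sum_of_support_subset _ fun x hx => hs x fun h => hx (by simp [h])

lemma sum_eq_partSum_add_card_filter {c : ℕ} (hs : ∀ x, f x ≠ 0 → x ∈ s)
    (hf : ∀ x ∈ s, f x ≤ c + 1) :
    ∑ x ∈ s, f x = partSum f c + #{x ∈ s | c + 1 ≤ f x} := by
  rw [partSum_eq_sum hs, card_filter, ← sum_add_distrib]
  exact sum_congr rfl fun x hx => by have := hf x hx; split_ifs <;> omega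

lemma TypeDefined.le_apply_of_le_card_filter (hf : TypeDefined f) {c n : ℕ} (hc : f 0 < c)
    (hn : 1 ≤ n) (h : n ≤ #{x ∈ s | c ≤ f x}) : c ≤ f n := by
  by_contra hlt
  have hsub : {x ∈ s | c ≤ f x} ⊆ Ioo 0 n := fun x hx => by
    have hcx := (mem_filter.1 hx).2
    have : x ≠ 0 := by rintro rfl; omega
    have : x < n := by
      by_contra hxn
      have := hf n x hn (by omega)
      omega
    exact mem_Ioo.2 ⟨by omega, this⟩
  have := card_le_card hsub
  rw [Nat.card_Ioo] at this
  omega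

end Conjugate

section HookFamily

variable {m r : ℕ}

lemma hookFam_eq_image (hm : 1 ≤ m) :
    hookFam m r = (Icc m (m + r - 1)).image fun e => insert e (Icc 1 (m - 1)) := by
  have hIcc : (Icc 1 r).image (m - 1 + ·) = Icc m (m + r - 1) := by
    rw [image_add_left_Icc]
    congr 1 <;> omega
  rw [← hIcc, image_image]
  rfl

lemma insert_Icc_injOn (m r : ℕ) :
    Set.InjOn (fun e => insert e (Icc 1 (m - 1))) ↑(Icc m (m + r - 1)) :=
  (insert_inj_on _).mono fun e he => by
    simp only [coe_Icc, Set.mem_Icc] at he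
    simp only [Set.mem_compl_iff, mem_coe, mem_Icc]
    omega

lemma isSetFamily_hookFam (hm : 1 ≤ m) : IsSetFamily m r (hookFam m r) := by
  rw [hookFam_eq_image hm]
  refine ⟨by rw [card_image_of_injOn (insert_Icc_injOn m r), Nat.card_Icc]; omega, ?_⟩
  simp only [mem_image, mem_Icc]
  rintro S ⟨e, he, rfl⟩
  refine ⟨?_, fun x hx => ?_⟩
  · rw [card_insert_of_notMem (by simp only [mem_Icc]; omega), Nat.card_Icc]
    omega
  · simp only [mem_insert, mem_Icc] at hx
    omega

lemma famMult_hookFam (hm : 1 ≤ m) (x : ℕ) :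
    famMult (hookFam m r) x =
      if 1 ≤ x ∧ x ≤ m - 1 then r else if m ≤ x ∧ x ≤ m + r - 1 then 1 else 0 := by
  rw [famMult, hookFam_eq_image hm, filter_image,
    card_image_of_injOn ((insert_Icc_injOn m r).mono (filter_subset _ _))]
  split_ifs with hI hE
  · rw [filter_true_of_mem fun e _ => mem_insert_of_mem (mem_Icc.2 hI), Nat.card_Icc]
    omega
  · rw [card_eq_one]
    exact ⟨x, by ext e; simp only [mem_filter, mem_insert, mem_Icc, mem_singleton]; omega⟩
  · rw [card_eq_zero, filter_eq_empty_iff]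
    simp only [mem_insert, mem_Icc]
    omega

lemma typeDefined_famMult_hookFam (hm : 1 ≤ m) : TypeDefined (famMult (hookFam m r)) := by
  intro i j hi hij
  rw [famMult_hookFam hm, famMult_hookFam hm]
  split_ifs <;> omega

end HookFamily

section Majorization

lemma le_getElem_of_pairwise_lt {l : List ℕ} (hl : l.Pairwise (· < ·)) {b : ℕ}
    (hb : ∀ x ∈ l, b ≤ x) (k : ℕ) (hk : k < l.length) : b + k ≤ l[k] := by
  induction l generalizing b k with
  | nil => simp at hk
  | cons a t ih =>
    rw [List.pairwise_cons] at hl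
    cases k with
    | zero => simpa using hb a (List.mem_cons_self ..)
    | succ k =>
      have hb' : ∀ x ∈ t, b + 1 ≤ x := fun x hx =>
        (hb a (List.mem_cons_self ..)).trans_lt (hl.1 x hx)
      have := ih hl.2 hb' k (by simpa using hk)
      simp only [List.getElem_cons_succ]
      omega

lemma add_one_le_getD_sort {A : Finset ℕ} (hA : ∀ x ∈ A, 1 ≤ x) {k : ℕ} (hk : k < A.card) :
    k + 1 ≤ (A.sort (· ≤ ·)).getD k 0 := by
  have hk' : k < (A.sort (· ≤ ·)).length := by rwa [length_sort]
  rw [List.getD_eq_getElem _ _ hk', add_comm]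
  exact le_getElem_of_pairwise_lt (sortedLT_sort A).pairwise (fun x hx => hA x (by simpa using hx))
    k hk'

lemma toFinset_range'_append (n e : ℕ) :
    (List.range' 1 n ++ [e]).toFinset = insert e (Icc 1 n) := by
  ext x
  simp only [List.mem_toFinset, List.mem_append, List.mem_range'_1, List.mem_singleton,
    mem_insert, mem_Icc]
  omega

lemma sort_insert_Icc {n e : ℕ} (he : n < e) :
    (insert e (Icc 1 n)).sort (· ≤ ·) = List.range' 1 n ++ [e] := by
  have hnd : (List.range' 1 n ++ [e]).Nodup := by
    rw [List.nodup_append]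
    refine ⟨List.nodup_range', List.nodup_singleton _, fun x hx y hy => ?_⟩
    rw [List.mem_range'_1] at hx
    rw [List.mem_singleton] at hy
    omega
  rw [← toFinset_range'_append, List.toFinset_sort _ hnd, List.pairwise_append]
  refine ⟨(List.pairwise_lt_range' (s := 1) (n := n)).imp le_of_lt,
    List.pairwise_singleton _ _, fun x hx y hy => ?_⟩
  rw [List.mem_range'_1] at hx
  rw [List.mem_singleton] at hy
  omega

lemma getD_range'_append (n e k : ℕ) :
    (List.range' 1 n ++ [e]).getD k 0 = if k < n then k + 1 else if k = n then e else 0 := by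
  have hlen : (List.range' 1 n ++ [e]).length = n + 1 := by
    rw [List.length_append, List.length_range', List.length_singleton]
  split_ifs with hkn hkn'
  · rw [List.getD_eq_getElem _ _ (by omega), List.getElem_append_left (by simpa),
      List.getElem_range']
    omega
  · subst hkn'
    rw [List.getD_eq_getElem _ _ (by omega), List.getElem_append_right (by simp)]
    simp
  · exact List.getD_eq_default _ _ (by omega)

lemma eq_insert_Icc_of_setMaj {n e : ℕ} {A : Finset ℕ} (he : n < e) (hA : A.card = n + 1)
    (hpos : ∀ x ∈ A, 1 ≤ x) (h : SetMaj A (insert e (Icc 1 n))) :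
    ∃ a, n < a ∧ a ≤ e ∧ A = insert a (Icc 1 n) := by
  have hmaj : ∀ k, (A.sort (· ≤ ·)).getD k 0 ≤ if k < n then k + 1 else if k = n then e else 0 :=
    fun k => by simpa only [sort_insert_Icc he, getD_range'_append] using h k
  set a := (A.sort (· ≤ ·)).getD n 0
  have hsort : A.sort (· ≤ ·) = List.range' 1 n ++ [a] := by
    apply List.ext_getElem (by simp [hA])
    intro k hk _
    rw [← List.getD_eq_getElem _ 0, ← List.getD_eq_getElem _ 0, getD_range'_append]
    rw [length_sort] at hk
    have hlow := add_one_le_getD_sort hpos hk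
    have hup := hmaj k
    split_ifs at hup ⊢ with hkn hkn' <;> first | omega | (subst hkn'; rfl)
  have hlow := add_one_le_getD_sort hpos (k := n) (by omega)
  have hup := hmaj n
  simp only [lt_irrefl, if_false, if_true] at hup
  exact ⟨a, by omega, hup, by rw [← sort_toFinset A (· ≤ ·), hsort, toFinset_range'_append]⟩

lemma closedFam_hookFam {m r : ℕ} (hm : 1 ≤ m) : ClosedFam m (hookFam m r) := by
  intro B hB A hA hpos hmaj
  rw [hookFam_eq_image hm, mem_image] at hB ⊢
  obtain ⟨e, he, rfl⟩ := hB
  rw [mem_Icc] at he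
  obtain ⟨a, han, hae, rfl⟩ := eq_insert_Icc_of_setMaj (by omega) (by omega) hpos hmaj
  exact ⟨a, mem_Icc.2 ⟨by omega, by omega⟩, rfl⟩

end Majorization

section Minimality

variable {m r : ℕ} {P : Finset (Finset ℕ)}

lemma le_famMult_pred_of_conjDom_hookFam (hm : 2 ≤ m) (hr : 1 ≤ r) (hP : IsSetFamily m r P)
    (hT : TypeDefined (famMult P)) (hD : ConjDom (famMult P) (famMult (hookFam m r))) :
    r ≤ famMult P (m - 1) := by
  obtain ⟨c, rfl⟩ : ∃ c, r = c + 1 := ⟨r - 1, by omega⟩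
  set H := hookFam m (c + 1)
  have hH : IsSetFamily m (c + 1) H := isSetFamily_hookFam (by omega)
  set V := (P ∪ H).biUnion id
  have hPV : ∀ x, famMult P x ≠ 0 → x ∈ V := fun _ =>
    mem_biUnion_of_famMult_ne_zero subset_union_left
  have hHV : ∀ x, famMult H x ≠ 0 → x ∈ V := fun _ =>
    mem_biUnion_of_famMult_ne_zero subset_union_right
  have hP_eq := sum_eq_partSum_add_card_filter hPV fun x _ => hP.1 ▸ famMult_le_card P x
  have hH_eq := sum_eq_partSum_add_card_filter hHV fun x _ => hH.1 ▸ famMult_le_card H x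
  rw [hP.sum_famMult fun S hS => subset_biUnion_of_mem id (mem_union_left H hS)] at hP_eq
  rw [hH.sum_famMult fun S hS => subset_biUnion_of_mem id (mem_union_right P hS)] at hH_eq
  have hHcore : m - 1 ≤ #{x ∈ V | c + 1 ≤ famMult H x} := by
    calc m - 1 = #(Icc 1 (m - 1)) := by rw [Nat.card_Icc]; omega
      _ ≤ _ := card_le_card fun x hx => by
        rw [mem_Icc] at hx
        have hHx : famMult H x = c + 1 := by rw [famMult_hookFam (by omega), if_pos hx]
        exact mem_filter.2 ⟨hHV x (by omega), hHx.ge⟩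
  have hDc := hD c
  exact hT.le_apply_of_le_card_filter (s := V) (by rw [hP.famMult_zero]; omega) (by omega)
    (by omega)

lemma one_le_famMult_of_Icc_subset (hm : 1 ≤ m) (hr : 1 ≤ r) (hP : IsSetFamily m r P)
    (hT : TypeDefined (famMult P)) (hI : ∀ S ∈ P, Icc 1 (m - 1) ⊆ S) :
    1 ≤ famMult P (m + r - 1) := by
  set U := P.biUnion id
  have hSU : ∀ S ∈ P, S ⊆ U := fun S hS => subset_biUnion_of_mem id hS
  have hdiff : r ≤ #(U \ Icc 1 (m - 1)) := hP.1 ▸ card_le_card_sdiff_of_forall_subset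
    (fun S hS => ⟨hI S hS, by rw [(hP.2 S hS).1, Nat.card_Icc]; omega⟩) hSU
  obtain ⟨S, hS⟩ : P.Nonempty := card_pos.1 (by rw [hP.1]; omega)
  have hcard : #(U \ Icc 1 (m - 1)) + #(Icc 1 (m - 1)) = #U := by
    rw [card_sdiff_add_card, union_eq_left.2 ((hI S hS).trans (hSU S hS))]
  have hIcc := Nat.card_Icc 1 (m - 1)
  have hfilter : {x ∈ U | 1 ≤ famMult P x} = U := filter_true_of_mem fun x hx => by
    obtain ⟨T, hTP, hxT⟩ := mem_biUnion.1 hx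
    exact one_le_famMult_of_mem hTP hxT
  exact hT.le_apply_of_le_card_filter (by rw [hP.famMult_zero]; omega) (by omega)
    (by rw [hfilter]; omega)

lemma famMult_eq_of_conjDom_hookFam (hm : 2 ≤ m) (hr : 1 ≤ r) (hP : IsSetFamily m r P)
    (hT : TypeDefined (famMult P)) (hD : ConjDom (famMult P) (famMult (hookFam m r))) :
    famMult P = famMult (hookFam m r) := by
  have hcore := le_famMult_pred_of_conjDom_hookFam hm hr hP hT hD
  have hI : ∀ x, 1 ≤ x → x ≤ m - 1 → famMult P x = r := fun x h1 h2 =>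
    le_antisymm (hP.1 ▸ famMult_le_card P x) (hcore.trans (hT x (m - 1) h1 h2))
  have htail := one_le_famMult_of_Icc_subset (by omega) hr hP hT fun S hS x hx => by
    rw [mem_Icc] at hx
    exact mem_of_famMult_eq_card (by rw [hP.1]; exact hI x hx.1 hx.2) hS
  refine ((isSetFamily_hookFam (by omega)).famMult_eq_of_le hP fun x => ?_).symm
  rw [famMult_hookFam (by omega)]
  split_ifs with h1 h2
  · exact (hI x h1.1 h1.2).ge
  · exact htail.trans (hT x _ (by omega) h2.2)
  · exact Nat.zero_le _

end Minimality

/-- For `m ≥ 2`, `r ≥ 1`, the family `hookFam m r` is a closed set family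
of shape `(m^r)` whose type is defined and equals `(m+r-1, (m-1)^{r-1})` — i.e. its
multiplicity function is the conjugate of that partition — and it is a minimal set family. -/
theorem stmt_9 (m r : ℕ) (hm : 2 ≤ m) (hr : 1 ≤ r) :
    IsSetFamily m r (hookFam m r) ∧
    ClosedFam m (hookFam m r) ∧
    TypeDefined (famMult (hookFam m r)) ∧
    (∀ x : ℕ, famMult (hookFam m r) x =
      if 1 ≤ x ∧ x ≤ m - 1 then r else if m ≤ x ∧ x ≤ m + r - 1 then 1 else 0) ∧
    ¬ ∃ P : Finset (Finset ℕ), IsSetFamily m r P ∧ TypeDefined (famMult P) ∧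
        ConjStrictDom (famMult P) (famMult (hookFam m r)) := by
  refine ⟨isSetFamily_hookFam (by omega), closedFam_hookFam (by omega),
    typeDefined_famMult_hookFam (by omega), famMult_hookFam (by omega), ?_⟩
  rintro ⟨P, hP, hT, hD, i, -, hi⟩
  exact hi (congrFun (famMult_eq_of_conjDom_hookFam hm hr hP hT hD) i)
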